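/- arXiv:1805.01160 — 3 statements merged into one kernel-verified Lean document; each statement's English description precedes it below -/
import Mathlib

section
/- Let A, C be unitary k×k complex matrices (viewed as real 2k×2k matrices in U(k) ⊂ Sp(2k,ℝ)) and B a real symplectic 2k×2k matrix such that A = B⁻¹ C B. Then A commutes with BᵀB. -/
open Matrix

/-- If `A, C ∈ U(k)` (real symplectic, orthogonal, commuting with `J₀`) and
`B ∈ Sp(2k,ℝ)` with `A = B⁻¹ C B`, then `A` commutes with `BᵀB`. -/
theorem commutes_with_transpose_mul_self {k : ℕ}
    (J₀ A B C : Matrix (Fin (2 * k)) (Fin (2 * k)) ℝ)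
    (hJ : J₀ * J₀ = -1)
    (hB : Bᵀ * J₀ * B = J₀) (hBinv : IsUnit B)
    (hAorth : Aᵀ * A = 1) (hCorth : Cᵀ * C = 1)
    (hAsympl : Aᵀ * J₀ * A = J₀) (hCsympl : Cᵀ * J₀ * C = J₀)
    (hAJ : A * J₀ = J₀ * A) (hCJ : C * J₀ = J₀ * C)
    (hABC : A = B⁻¹ * C * B) :
    (Bᵀ * B) * A = A * (Bᵀ * B) := by
  have hBu : Invertible B := hBinv.invertible
  have hBA : B * A = C * B := by
    rw [hABC, ← mul_assoc, ← mul_assoc, Matrix.mul_inv_of_invertible B, one_mul]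
  -- transpose: Aᵀ * Bᵀ = Bᵀ * Cᵀ
  have hT : Aᵀ * Bᵀ = Bᵀ * Cᵀ := by
    have := congrArg Matrix.transpose hBA
    simpa [Matrix.transpose_mul] using this
  have hAAt : A * Aᵀ = 1 := mul_eq_one_comm.mp hAorth
  have hABt : A * Bᵀ = Bᵀ * C := by
    calc A * Bᵀ = A * Bᵀ * (Cᵀ * C) := by rw [hCorth, mul_one]
      _ = A * (Bᵀ * Cᵀ) * C := by simp only [mul_assoc]
      _ = A * (Aᵀ * Bᵀ) * C := by rw [hT]
      _ = A * Aᵀ * (Bᵀ * C) := by simp only [mul_assoc]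
      _ = Bᵀ * C := by rw [hAAt, one_mul]
  calc (Bᵀ * B) * A = Bᵀ * (B * A) := by rw [mul_assoc]
    _ = Bᵀ * C * B := by rw [hBA, mul_assoc]
    _ = A * Bᵀ * B := by rw [hABt]
    _ = A * (Bᵀ * B) := by rw [mul_assoc]
end

section
/- Let A, C ∈ U(k) (orthogonal symplectic matrices commuting with J₀) and B ∈ Sp(2k,ℝ) with A = B⁻¹ C B. Define r(B) = B (BᵀB)^{-1/2}. Then A = r(B)⁻¹ C r(B). -/
/-!
From `B A = C B` and the orthogonality of `A` and `C` one gets `Aᵀ (BᵀB) A = BᵀB`, so `A` commutes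
with `BᵀB`. The positive square root `S` of `BᵀB` is a continuous function of `BᵀB`, hence also
commutes with `A`; then `(B S⁻¹)⁻¹ C (B S⁻¹) = S (B⁻¹ C B) S⁻¹ = S A S⁻¹ = A`.
-/

open Matrix

theorem Commute.star_mul_self_of_mul_eq {R : Type*} [Monoid R] [StarMul R] {a b c : R}
    (ha : a ∈ unitary R) (hc : star c * c = 1) (h : b * a = c * b) :
    Commute a (star b * b) := by
  have hconj : star a * (star b * b) * a = star b * b := by
    calc star a * (star b * b) * a = star (b * a) * (b * a) := by simp [mul_assoc]
      _ = star b * (star c * c) * b := by simp [h, mul_assoc]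
      _ = star b * b := by rw [hc, mul_one]
  calc a * (star b * b) = a * (star a * (star b * b) * a) := by rw [hconj]
    _ = star b * b * a := by simp [← mul_assoc, Unitary.mul_star_self_of_mem ha]

theorem Commute.of_mul_self_eq_of_nonneg {A : Type*} [PartialOrder A] [Ring A] [StarRing A]
    [TopologicalSpace A] [Algebra ℝ A] [StarOrderedRing A]
    [ContinuousFunctionalCalculus ℝ A IsSelfAdjoint] [NonnegSpectrumClass ℝ A]
    [IsTopologicalRing A] [T2Space A] {s m b : A}
    (hs : 0 ≤ s) (hsm : s * s = m) (h : Commute m b) : Commute s b :=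
  CFC.sqrt_unique hsm hs ▸ h.cfcₙ_nnreal NNReal.sqrt

theorem Matrix.star_eq_transpose {n R : Type*} [Star R] [TrivialStar R] (M : Matrix n n R) :
    star M = Mᵀ := by
  rw [star_eq_conjTranspose, conjTranspose_eq_transpose_of_trivial]

theorem retraction_conjugation_general {k : ℕ}
    (A B C S : Matrix (Fin (2 * k)) (Fin (2 * k)) ℝ)
    (hBinv : IsUnit B)
    (hAorth : Aᵀ * A = 1) (hCorth : Cᵀ * C = 1)
    (hABC : A = B⁻¹ * C * B)
    (hS : S.PosDef) (hSsq : S * S = Bᵀ * B) :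
    A = (B * S⁻¹)⁻¹ * C * (B * S⁻¹) := by
  have hBdet : IsUnit B.det := (isUnit_iff_isUnit_det B).mp hBinv
  have hSdet : IsUnit S.det := isUnit_iff_ne_zero.mpr hS.det_pos.ne'
  have hA : A ∈ unitary _ := mem_unitaryGroup_iff'.mpr (by rwa [star_eq_transpose])
  have hBA : B * A = C * B := by
    rw [hABC, ← mul_assoc, ← mul_assoc, mul_nonsing_inv _ hBdet, one_mul]
  have hAM : Commute A (Bᵀ * B) := by
    simpa only [star_eq_transpose] using
      Commute.star_mul_self_of_mul_eq hA (by rwa [star_eq_transpose]) hBA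
  have hSA : Commute S A := by
    open scoped MatrixOrder Matrix.Norms.L2Operator in
    exact Commute.of_mul_self_eq_of_nonneg hS.posSemidef.nonneg hSsq hAM.symm
  rw [Matrix.mul_inv_rev, nonsing_inv_nonsing_inv _ hSdet]
  calc A = S * A * S⁻¹ := by rw [hSA.eq, mul_assoc, mul_nonsing_inv _ hSdet, mul_one]
    _ = S * B⁻¹ * C * (B * S⁻¹) := by rw [hABC]; noncomm_ring

/-- For `A, C ∈ U(k)` and `B ∈ Sp(2k,ℝ)` with `A = B⁻¹ C B`, the unitary
retraction `r(B) = B (BᵀB)^{-1/2}` satisfies `A = r(B)⁻¹ C r(B)`. Here `S` denotes the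
unique symmetric positive definite square root of `BᵀB`. -/
theorem retraction_conjugation {k : ℕ}
    (J₀ A B C S : Matrix (Fin (2 * k)) (Fin (2 * k)) ℝ)
    (hJ : J₀ * J₀ = -1)
    (hB : Bᵀ * J₀ * B = J₀) (hBinv : IsUnit B)
    (hAorth : Aᵀ * A = 1) (hCorth : Cᵀ * C = 1)
    (hAJ : A * J₀ = J₀ * A) (hCJ : C * J₀ = J₀ * C)
    (hABC : A = B⁻¹ * C * B)
    (hS : S.PosDef) (hSsymm : Sᵀ = S) (hSsq : S * S = Bᵀ * B) :
    A = (B * S⁻¹)⁻¹ * C * (B * S⁻¹) :=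
  retraction_conjugation_general A B C S hBinv hAorth hCorth hABC hS hSsq
end

section
/- Let V be a finite-dimensional real vector space with inner product g₀ and symplectic form ω, let A be defined by g₀(u,Av) = ω(u,v), and set J := −(√(−A²))⁻¹ A. Then J² = −Id, the bilinear form g(u,v) := ω(u, J v) is a positive-definite inner product, g(Ju, Jv) = g(u,v), and ω(Ju, Jv) = ω(u,v). -/
open RealInnerProductSpace

/-- Let `A` be defined by `g₀(u,Av) = ω(u,v)`, let `S` be the unique
symmetric positive-definite square root of `-A²`, and `J := -S⁻¹ A` (encoded by
`S ∘ J = -A`). Then `J² = -Id`, `g(u,v) := ω(u, Jv)` is a positive-definite inner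
product, `g(Ju,Jv) = g(u,v)` and `ω(Ju,Jv) = ω(u,v)`. -/
theorem compatible_complex_structure {V : Type*} [NormedAddCommGroup V]
    [InnerProductSpace ℝ V] [FiniteDimensional ℝ V]
    (ω : V →ₗ[ℝ] V →ₗ[ℝ] ℝ)
    (hanti : ∀ u v : V, ω u v = - ω v u)
    (hnd : ∀ u : V, (∀ v : V, ω u v = 0) → u = 0)
    (A : V →ₗ[ℝ] V)
    (hA : ∀ u v : V, ⟪u, A v⟫ = ω u v)
    (S J : V →ₗ[ℝ] V)
    (hSsymm : ∀ u v : V, ⟪S u, v⟫ = ⟪u, S v⟫)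
    (hSpos : ∀ u : V, u ≠ 0 → 0 < ⟪S u, u⟫)
    (hSsq : S ∘ₗ S = -(A ∘ₗ A))
    (hJ : S ∘ₗ J = -A) :
    J ∘ₗ J = -LinearMap.id ∧
    (∀ u v : V, ω u (J v) = ω v (J u)) ∧
    (∀ u : V, u ≠ 0 → 0 < ω u (J u)) ∧
    (∀ u v : V, ω (J u) (J (J v)) = ω u (J v)) ∧
    (∀ u v : V, ω (J u) (J v) = ω u v) := by
  have hSS : ∀ v : V, S (S v) = -(A (A v)) := fun v => LinearMap.ext_iff.mp hSsq v
  have hSJ : ∀ v : V, S (J v) = -(A v) := fun v => LinearMap.ext_iff.mp hJ v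
  -- S is injective
  have hSker : ∀ v : V, S v = 0 → v = 0 := by
    intro v hv
    by_contra h
    have h1 := hSpos v h
    rw [hv, inner_zero_left] at h1
    exact lt_irrefl 0 h1
  have hSinj : Function.Injective S := by
    intro x y h
    have h1 : S (x - y) = 0 := by rw [map_sub, h, sub_self]
    exact sub_eq_zero.mp (hSker _ h1)
  -- eigenvectors of S with positive eigenvalue are mapped by A to eigenvectors
  have eig : ∀ (c : ℝ) (v : V), 0 < c → S v = c • v → S (A v) = c • A v := by
    intro c v hc hv
    set w := S (A v) - c • A v with hw
    have hAAA : A (A (A v)) = -((c * c) • A v) := by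
      have h1 : A (S (S v)) = -(A (A (A v))) := by rw [hSS v, map_neg]
      have h2 : A (S (S v)) = (c * c) • A v := by
        rw [hv, map_smul, hv, map_smul, map_smul, smul_smul]
      rw [h2] at h1
      linear_combination (norm := module) h1
    have hSw : S w = -(c • w) := by
      have h1 : S (S (A v)) = (c * c) • A v := by
        rw [hSS (A v), hAAA, neg_neg]
      rw [hw, map_sub, map_smul, h1]
      module
    have hw0 : w = 0 := by
      by_contra h
      have h1 := hSpos w h
      rw [hSw, inner_neg_left, real_inner_smul_left] at h1
      have h2 : (0:ℝ) ≤ ⟪w, w⟫ := real_inner_self_nonneg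
      nlinarith
    exact sub_eq_zero.mp hw0
  -- S commutes with A
  have hSymm : S.IsSymmetric := fun u v => hSsymm u v
  have hcomm : ∀ v : V, S (A v) = A (S v) := by
    have hrank : Module.finrank ℝ V = Module.finrank ℝ V := rfl
    set b := hSymm.eigenvectorBasis hrank with hb
    set μ := hSymm.eigenvalues hrank with hμ
    have heig : ∀ i, S (b i) = μ i • b i := fun i =>
      hSymm.apply_eigenvectorBasis hrank i
    have hpos : ∀ i, 0 < μ i := by
      intro i
      have hne : b i ≠ 0 := b.orthonormal.ne_zero i
      have h1 := hSpos (b i) hne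
      rw [heig i, real_inner_smul_left, real_inner_self_eq_norm_sq,
        b.orthonormal.1 i] at h1
      simpa using h1
    have hext : S ∘ₗ A = A ∘ₗ S := by
      apply b.toBasis.ext
      intro i
      simp only [LinearMap.comp_apply, OrthonormalBasis.coe_toBasis]
      rw [heig i, map_smul, eig (μ i) (b i) (hpos i) (heig i)]
    exact fun v => LinearMap.ext_iff.mp hext v
  have hAJ : ∀ v : V, A (J v) = S v := by
    intro v
    apply hSinj
    rw [hcomm (J v), hSJ v, map_neg, hSS v]
  have hJJ : ∀ v : V, J (J v) = -v := by
    intro v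
    apply hSinj
    rw [hSJ (J v), hAJ v, map_neg]
  -- the symmetric positive form: ω u (J v) = ⟪u, S v⟫
  have hg : ∀ u v : V, ω u (J v) = ⟪u, S v⟫ := by
    intro u v
    rw [← hA, hAJ]
  refine ⟨?_, ?_, ?_, ?_, ?_⟩
  · ext v
    simp [hJJ v]
  · intro u v
    rw [hg, hg, ← hSsymm, real_inner_comm]
  · intro u hu
    rw [hg, real_inner_comm]
    exact hSpos u hu
  · intro u v
    rw [hJJ v, map_neg, hanti, neg_neg, hg, hg, ← hSsymm, real_inner_comm]
  · intro u v
    rw [hg, ← hSsymm, hSJ]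
    simp only [LinearMap.neg_apply, inner_neg_left]
    rw [real_inner_comm, hA]
    exact (hanti u v).symm
end
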